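/- arXiv:1307.0366 — 3 statements merged into one kernel-verified Lean document; each statement's English description precedes it below -/
import Mathlib

section
/- If π* is a topological ordering of a DAG G* and the CI model satisfies the global Markov property with respect to G* (all d-separations in G* are CI statements), then the DAG G_{π*} constructed from π* has edge set contained in that of G*; consequently the number of edges of G_{π*} is at most the number of edges of G*. -/
open scoped Classical

/-- A directed acyclic graph on `Fin p`: a finite edge set together with a
topological ordering witnessing acyclicity. -/
structure DAG (p : ℕ) where
  edges : Finset (Fin p × Fin p)
  acyclic : ∃ σ : Equiv.Perm (Fin p), ∀ e ∈ edges, σ.symm e.1 < σ.symm e.2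

namespace DAG

variable {p : ℕ}

def edgeRel (G : DAG p) (a b : Fin p) : Prop := (a, b) ∈ G.edges

/-- adjacency in the skeleton -/
def adj (G : DAG p) (a b : Fin p) : Prop := (a, b) ∈ G.edges ∨ (b, a) ∈ G.edges

/-- the skeleton as a finite set of unordered pairs -/
def skeleton (G : DAG p) : Finset (Sym2 (Fin p)) := G.edges.image (fun e => s(e.1, e.2))

/-- `b` is a collider on a path segment `a - b - c`. -/
def isCollider (G : DAG p) (a b c : Fin p) : Prop := (a, b) ∈ G.edges ∧ (c, b) ∈ G.edges

/-- `b` is in `S` or an ancestor of some element of `S`. -/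
def ancestorOfSet (G : DAG p) (b : Fin p) (S : Finset (Fin p)) : Prop :=
  ∃ s ∈ S, Relation.ReflTransGen G.edgeRel b s

/-- a (simple, undirected) path from `i` to `j` in the skeleton, as a list of vertices -/
def IsTrail (G : DAG p) (i j : Fin p) (l : List (Fin p)) : Prop :=
  l.Chain' G.adj ∧ l.Nodup ∧ 2 ≤ l.length ∧ l.head? = some i ∧ l.getLast? = some j

/-- the path `l` d-connects its endpoints given `S`: every collider on it is in `S` or
has a descendant in `S`, and every non-collider on it is not in `S`. -/
def dConnectsPath (G : DAG p) (S : Finset (Fin p)) (l : List (Fin p)) : Prop :=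
  ∀ a b c : Fin p, [a, b, c] <:+: l →
    (G.isCollider a b c → G.ancestorOfSet b S) ∧ (¬ G.isCollider a b c → b ∉ S)

def dConnected (G : DAG p) (i j : Fin p) (S : Finset (Fin p)) : Prop :=
  ∃ l : List (Fin p), G.IsTrail i j l ∧ G.dConnectsPath S l

def dSep (G : DAG p) (i j : Fin p) (S : Finset (Fin p)) : Prop :=
  i ≠ j ∧ ¬ G.dConnected i j S

end DAG

/-- A (pairwise) conditional independence model: `CI i j S` means
`X_i ⫫ X_j | X_S`. -/
abbrev CIModel (p : ℕ) := Fin p → Fin p → Finset (Fin p) → Prop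

variable {p : ℕ}

/-- `G` is Markov w.r.t. the CI model: every d-separation is a CI statement. -/
def Markov (G : DAG p) (CI : CIModel p) : Prop :=
  ∀ i j S, G.dSep i j S → CI i j S

/-- Markov equivalence: same d-separation statements. -/
def MarkovEquiv (G G' : DAG p) : Prop :=
  ∀ i j S, G.dSep i j S ↔ G'.dSep i j S

/-- `π` is a topological ordering of `G`. -/
def IsTopOrder (G : DAG p) (π : Equiv.Perm (Fin p)) : Prop :=
  ∀ e ∈ G.edges, π.symm e.1 < π.symm e.2

/-- the predecessors `{π 0, …, π (k-1)}` of position `k` in the ordering `π` -/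
def predSet (π : Equiv.Perm (Fin p)) (k : Fin p) : Finset (Fin p) :=
  (Finset.univ.filter (fun m => m < k)).image π

/-- The minimal I-map `G_π`: for `j < k` there is an edge `π j → π k` iff
`π j` and `π k` are conditionally dependent given all other predecessors of `π k`. -/
noncomputable def minimalIMap (CI : CIModel p) (π : Equiv.Perm (Fin p)) : DAG p where
  edges := Finset.univ.filter (fun q : Fin p × Fin p =>
    ∃ j k : Fin p, j < k ∧ q = (π j, π k) ∧ ¬ CI (π j) (π k) ((predSet π k).erase (π j)))
  acyclic := ⟨π, by
    intro e he
    rw [Finset.mem_filter] at he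
    obtain ⟨-, j, k, hjk, rfl, -⟩ := he
    simpa using hjk⟩

/-- the minimal number of edges of a minimal I-map `G_π` over all permutations `π` -/
noncomputable def spScore (CI : CIModel p) : ℕ :=
  ((Finset.univ : Finset (Equiv.Perm (Fin p))).image
    (fun π => (minimalIMap CI π).edges.card)).min' (Finset.univ_nonempty.image _)

/-- adjacency-faithfulness: endpoints of edges of `G` are conditionally dependent
given any conditioning set. -/
def AdjFaithful (G : DAG p) (CI : CIModel p) : Prop :=
  ∀ e ∈ G.edges, ∀ S : Finset (Fin p), e.1 ∉ S → e.2 ∉ S →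
    ¬ CI e.1 e.2 S ∧ ¬ CI e.2 e.1 S

/-- the sparsest Markov representation assumption -/
def SMR (G : DAG p) (CI : CIModel p) : Prop :=
  Markov G CI ∧
    ∀ G' : DAG p, Markov G' CI → ¬ MarkovEquiv G' G → G.edges.card < G'.edges.card

/-- the set of d-separation statements of `G` -/
def DsepSet (G : DAG p) : Set (Fin p × Fin p × Finset (Fin p)) :=
  {t | G.dSep t.1 t.2.1 t.2.2}

/-- P-minimality: no Markov DAG entails strictly more d-separations. -/
def PMinimal (G : DAG p) (CI : CIModel p) : Prop :=
  ∀ G' : DAG p, Markov G' CI → ¬ (DsepSet G ⊂ DsepSet G')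

/-!
If `π j → π k` is not an edge of `G`, take any path from `π j` to `π k` that d-connects them
given the other predecessors `S` of `π k`. Its topmost vertex (in the order `π`) cannot be an
inner vertex, since both path edges would point into it and a collider must lie below some
element of `S`, hence below `π k`. So the whole path lies below `π k`, and the vertex `v` just
before `π k` is joined to it by the edge `v → π k`. Then `v ≠ π j`, so `v ∈ S` is a
non-collider on the path, which d-connection forbids. Thus `π j` and `π k` are d-separated
by `S`, and the Markov property makes them independent given `S`: no edge `π j → π k` in `G_π`.
-/

theorem List.exists_triple_infix_of_mem {α : Type*} {l : List α} {x : α} (hx : x ∈ l)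
    (hhead : l.head? ≠ some x) (hlast : l.getLast? ≠ some x) : ∃ u w, [u, x, w] <:+: l := by
  induction l with
  | nil => simp at hx
  | cons y t ih =>
    obtain _ | ⟨z, t'⟩ := t
    · simp_all
    obtain rfl | hxt := List.mem_cons.mp hx
    · simp at hhead
    by_cases hzx : z = x
    · subst hzx
      obtain _ | ⟨w, t''⟩ := t'
      · simp at hlast
      exact ⟨y, w, List.infix_append [] _ _⟩
    · have hlast' : (z :: t').getLast? ≠ some x := by
        rwa [List.getLast?_cons_cons] at hlast
      obtain ⟨u, w, h⟩ := ih hxt (by simpa using hzx) hlast'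
      exact ⟨u, w, List.infix_cons h⟩

theorem mem_predSet {π : Equiv.Perm (Fin p)} {k : Fin p} {v : Fin p} :
    v ∈ predSet π k ↔ π.symm v < k := by
  simp only [predSet, Finset.mem_image, Finset.mem_filter, Finset.mem_univ, true_and]
  constructor
  · rintro ⟨m, hm, rfl⟩
    simpa using hm
  · exact fun h => ⟨π.symm v, h, π.apply_symm_apply v⟩

namespace IsTopOrder

variable {G : DAG p} {π : Equiv.Perm (Fin p)}

theorem le_of_reflTransGen (hπ : IsTopOrder G π) {u v : Fin p}
    (huv : Relation.ReflTransGen G.edgeRel u v) : π.symm u ≤ π.symm v := by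
  induction huv with
  | refl => rfl
  | tail _ hbc ih => exact ih.trans (hπ _ hbc).le

theorem mem_edges_of_adj (hπ : IsTopOrder G π) {u v : Fin p} (huv : G.adj u v)
    (hle : π.symm u ≤ π.symm v) : (u, v) ∈ G.edges :=
  huv.resolve_right fun hvu => (hπ _ hvu).not_ge hle

theorem isCollider_of_adj (hπ : IsTopOrder G π) {a b c : Fin p} (hab : G.adj a b)
    (hbc : G.adj b c) (ha : π.symm a ≤ π.symm b) (hc : π.symm c ≤ π.symm b) :
    G.isCollider a b c :=
  ⟨hπ.mem_edges_of_adj hab ha, hπ.mem_edges_of_adj (Or.symm hbc) hc⟩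

theorem exists_top_of_dConnectsPath (hπ : IsTopOrder G π) {i j : Fin p} {S : Finset (Fin p)}
    {l : List (Fin p)} (hl : G.IsTrail i j l) (hS : G.dConnectsPath S l) :
    ∃ m, (m = i ∨ m = j ∨ G.ancestorOfSet m S) ∧ ∀ v ∈ l, π.symm v ≤ π.symm m := by
  obtain ⟨hchain, -, hlen, hhead, hlast⟩ := hl
  have hne : l.toFinset.Nonempty := by
    rw [List.toFinset_nonempty_iff]; rintro rfl; simp at hlen
  obtain ⟨m, hm, hmax⟩ := Finset.exists_max_image _ (fun v => π.symm v) hne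
  refine ⟨m, ?_, fun v hv => hmax v (List.mem_toFinset.mpr hv)⟩
  by_cases hmi : m = i
  · exact Or.inl hmi
  by_cases hmj : m = j
  · exact Or.inr (Or.inl hmj)
  obtain ⟨u, w, huw⟩ := List.exists_triple_infix_of_mem (List.mem_toFinset.mp hm)
    (by simpa [hhead] using Ne.symm hmi) (by simpa [hlast] using Ne.symm hmj)
  have hadj := hchain.infix huw
  simp only [List.isChain_cons_cons, List.isChain_singleton, and_true] at hadj
  have hcol := hπ.isCollider_of_adj hadj.1 hadj.2
    (hmax u (List.mem_toFinset.mpr (huw.subset (by simp))))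
    (hmax w (List.mem_toFinset.mpr (huw.subset (by simp))))
  exact Or.inr (Or.inr ((hS u m w huw).1 hcol))

theorem dSep_erase_predSet (hπ : IsTopOrder G π) {j k : Fin p} (hjk : j < k)
    (hne : (π j, π k) ∉ G.edges) :
    G.dSep (π j) (π k) ((predSet π k).erase (π j)) := by
  set S := (predSet π k).erase (π j)
  have hS : ∀ {v}, v ∈ S ↔ v ≠ π j ∧ π.symm v < k := by simp [S, mem_predSet]
  refine ⟨fun h => hjk.ne (π.injective h), ?_⟩
  rintro ⟨l, hl, hd⟩
  have hbelow : ∀ v ∈ l, π.symm v ≤ k := by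
    obtain ⟨m, hm, hmax⟩ := hπ.exists_top_of_dConnectsPath hl hd
    have hkm : k ≤ π.symm m := by
      simpa using hmax (π k) (List.mem_of_getLast? hl.2.2.2.2)
    rcases hm with rfl | rfl | ⟨s, hs, hms⟩
    · exact absurd hjk (by simpa using hkm)
    · simpa using hmax
    · exact absurd ((hπ.le_of_reflTransGen hms).trans_lt (hS.1 hs).2) hkm.not_gt
  obtain ⟨hchain, hnodup, hlen, hhead, hlast⟩ := hl
  obtain ⟨L, v, rfl⟩ : ∃ L v, l = L ++ [v, π k] := by
    obtain rfl | ⟨L₁, b, rfl⟩ := l.eq_nil_or_concat'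
    · simp at hlen
    obtain rfl | ⟨L, v, rfl⟩ := L₁.eq_nil_or_concat'
    · simp at hlen
    exact ⟨L, v, by simpa using hlast⟩
  have hv : π.symm v < k := by
    have hv_ne : v ≠ π k := by simpa using hnodup.sublist (List.sublist_append_right L _)
    exact (hbelow v (by simp)).lt_of_ne fun h => hv_ne (by simp [← h])
  have hvk : (v, π k) ∈ G.edges := hπ.mem_edges_of_adj
    (List.isChain_pair.mp (hchain.infix List.infix_append_right)) (by simpa using hv.le)
  have hvj : v ≠ π j := by rintro rfl; exact hne hvk
  obtain ⟨L', u, rfl⟩ : ∃ L' u, L = L' ++ [u] := by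
    obtain rfl | hL := L.eq_nil_or_concat'
    · simp_all
    exact hL
  have hcol : G.isCollider u v (π k) := by
    by_contra hncol
    exact (hd u v (π k) (by simpa using List.infix_append_right)).2 hncol (hS.2 ⟨hvj, hv⟩)
  exact (hπ _ hcol.2).not_gt (by simpa using hv)

end IsTopOrder

/-- If `π` is a topological ordering of `G` and the CI model is Markov w.r.t. `G`,
then the minimal I-map `G_π` has edge set contained in that of `G`; consequently
it has at most as many edges as `G`. -/
theorem minimalIMap_subset_of_topOrder (CI : CIModel p) (G : DAG p)
    (π : Equiv.Perm (Fin p)) (htop : IsTopOrder G π) (hMarkov : Markov G CI) :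
    (minimalIMap CI π).edges ⊆ G.edges ∧
      (minimalIMap CI π).edges.card ≤ G.edges.card := by
  have hsub : (minimalIMap CI π).edges ⊆ G.edges := by
    intro q hq
    obtain ⟨-, j, k, hjk, rfl, hdep⟩ := Finset.mem_filter.mp hq
    by_contra hne
    exact hdep (hMarkov _ _ _ (htop.dSep_erase_predSet hjk hne))
  exact ⟨hsub, Finset.card_le_card hsub⟩
end

section
/- If the CI model satisfies adjacency-faithfulness with respect to a DAG G* (for every edge (j,k) of G*, X_j and X_k are conditionally dependent given X_S for all S ⊆ V \ {j,k}), then for every permutation π, the skeleton of G* is contained in the skeleton of G_π. -/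
open scoped Classical

variable {p : ℕ}

/-- Under adjacency-faithfulness w.r.t. `G`, the skeleton of `G` is contained in
the skeleton of every minimal I-map `G_π`. -/
theorem skeleton_subset_minimalIMap_of_adjFaithful (CI : CIModel p) (G : DAG p)
    (hAF : AdjFaithful G CI) (π : Equiv.Perm (Fin p)) :
    G.skeleton ⊆ (minimalIMap CI π).skeleton := by
  have hnp : ∀ m : Fin p, π m ∉ predSet π m := by
    intro m hm
    simp only [predSet, Finset.mem_image, Finset.mem_filter, Finset.mem_univ, true_and] at hm
    obtain ⟨x, hx, hxe⟩ := hm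
    exact absurd (π.injective hxe ▸ hx) (lt_irrefl m)
  intro s hs
  simp only [DAG.skeleton, Finset.mem_image] at hs ⊢
  obtain ⟨⟨a, b⟩, he, rfl⟩ := hs
  obtain ⟨σ, hσ⟩ := G.acyclic
  have hab : a ≠ b := by
    intro h; subst h; exact lt_irrefl _ (hσ _ he)
  set j := π.symm a with hj
  set k := π.symm b with hk
  have hja : π j = a := π.apply_symm_apply a
  have hkb : π k = b := π.apply_symm_apply b
  have hjk : j ≠ k := fun h => hab (by rw [← hja, ← hkb, h])
  rcases hjk.lt_or_gt with h | h
  · refine ⟨(a, b), ?_, rfl⟩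
    simp only [minimalIMap, Finset.mem_filter, Finset.mem_univ, true_and]
    refine ⟨j, k, h, by rw [hja, hkb], ?_⟩
    rw [hja, hkb]
    have hbS : b ∉ (predSet π k).erase a := fun hb =>
      (hkb ▸ hnp k) (Finset.mem_of_mem_erase hb)
    exact (hAF (a, b) he _ (Finset.notMem_erase a _) hbS).1
  · refine ⟨(b, a), ?_, Sym2.eq_swap⟩
    simp only [minimalIMap, Finset.mem_filter, Finset.mem_univ, true_and]
    refine ⟨k, j, h, by rw [hja, hkb], ?_⟩
    rw [hja, hkb]
    have haS : a ∉ (predSet π j).erase b := fun ha =>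
      (hja ▸ hnp j) (Finset.mem_of_mem_erase ha)
    exact (hAF (a, b) he _ haS (Finset.notMem_erase b _)).2
end

section
/- The sparsest permutation algorithm outputs exactly the Markov equivalence class of G* if and only if the pair (G*, P) satisfies the sparsest Markov representation (SMR) assumption: (G*, P) is Markov and every DAG G Markov with respect to P with G not Markov-equivalent to G* has strictly more edges than G*. -/
/-!
Two vertices of a DAG are adjacent iff no set d-separates them: a non-adjacent pair is
d-separated by the parents of whichever comes later in a topological order. Hence Markov
equivalent DAGs share their skeleton and in particular their number of edges. Every Markov DAG
contains a minimal Markov DAG, which is some `G_π`; so `spScore` is the least number of edges of a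
Markov DAG, and the SP outputs are exactly the Markov DAGs attaining it. Both sides of the
equivalence then say that these sparsest Markov DAGs are exactly the DAGs Markov equivalent
to `G*`.
-/

open scoped Classical

variable {p : ℕ}

/-- the set of DAGs output by the SP algorithm: all minimal I-maps `G_π` attaining
the minimal edge count over all permutations -/
noncomputable def SPOutputs (CI : CIModel p) : Set (DAG p) :=
  {G | ∃ π : Equiv.Perm (Fin p), minimalIMap CI π = G ∧
        (minimalIMap CI π).edges.card = spScore CI}

theorem IsTopOrder.le_of_reflTransGen_s8 {G : DAG p} {σ : Equiv.Perm (Fin p)}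
    (hσ : IsTopOrder G σ) {a b : Fin p} (h : Relation.ReflTransGen G.edgeRel a b) :
    σ.symm a ≤ σ.symm b := by
  induction h with
  | refl => exact le_rfl
  | tail _ hbc ih => exact ih.trans (hσ _ hbc).le

namespace DAG

variable {G : DAG p}

theorem edges_injective : Function.Injective (DAG.edges (p := p)) := by
  rintro ⟨_, _⟩ ⟨_, _⟩ rfl
  rfl

theorem not_mem_edges_self (a : Fin p) : (a, a) ∉ G.edges := by
  obtain ⟨σ, hσ⟩ := G.acyclic
  exact fun h => lt_irrefl _ (hσ _ h)

theorem not_mem_edges_swap {a b : Fin p} (h : (a, b) ∈ G.edges) : (b, a) ∉ G.edges := by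
  obtain ⟨σ, hσ⟩ := G.acyclic
  exact fun h' => lt_asymm (hσ _ h) (hσ _ h')

theorem adj.symm {a b : Fin p} (h : G.adj a b) : G.adj b a := Or.symm h

theorem adj.ne {a b : Fin p} (h : G.adj a b) : a ≠ b := by
  rintro rfl
  exact h.elim (not_mem_edges_self a) (not_mem_edges_self a)

theorem isCollider.symm {a b c : Fin p} (h : G.isCollider a b c) : G.isCollider c b a :=
  ⟨h.2, h.1⟩

theorem dConnectsPath.reverse {S : Finset (Fin p)} {l : List (Fin p)}
    (h : G.dConnectsPath S l) : G.dConnectsPath S l.reverse := by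
  intro a b c habc
  have hcba : [c, b, a] <:+: l := by simpa using List.reverse_infix.mpr habc
  exact ⟨fun hcol => (h c b a hcba).1 hcol.symm,
    fun hncol => (h c b a hcba).2 fun hcol => hncol hcol.symm⟩

theorem IsTrail.reverse {i j : Fin p} {l : List (Fin p)} (h : G.IsTrail i j l) :
    G.IsTrail j i l.reverse := by
  obtain ⟨hchain, hnodup, hlen, hhead, hlast⟩ := h
  refine ⟨?_, List.nodup_reverse.mpr hnodup, by simpa using hlen, by simpa using hlast,
    by simpa using hhead⟩
  exact List.isChain_reverse.mpr (hchain.imp fun _ _ h => adj.symm h)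

theorem dConnected.symm {i j : Fin p} {S : Finset (Fin p)} (h : G.dConnected i j S) :
    G.dConnected j i S :=
  let ⟨l, htrail, hconn⟩ := h
  ⟨l.reverse, htrail.reverse, hconn.reverse⟩

theorem dSep.symm {i j : Fin p} {S : Finset (Fin p)} (h : G.dSep i j S) : G.dSep j i S :=
  ⟨h.1.symm, fun hc => h.2 hc.symm⟩

theorem dConnected_of_adj {i j : Fin p} (h : G.adj i j) (S : Finset (Fin p)) :
    G.dConnected i j S := by
  refine ⟨[i, j], ⟨List.isChain_pair.mpr h, by simp [h.ne], by simp, rfl, rfl⟩, ?_⟩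
  intro a b c habc
  simpa using habc.length_le

def parents (G : DAG p) (j : Fin p) : Finset (Fin p) :=
  Finset.univ.filter fun x => (x, j) ∈ G.edges

/-- Walking along `l` towards its head, an edge pointing back out of a descendant of `j` keeps
pointing back: the vertex it enters cannot be a collider, since then it would be a descendant of
`j` and an ancestor of a parent of `j`. So the walk reaches the head `i`, which precedes `j`. -/
theorem not_reflTransGen_of_back_edge {σ : Equiv.Perm (Fin p)} (hσ : IsTopOrder G σ)
    {i j : Fin p} (hij : σ.symm i < σ.symm j) {l : List (Fin p)} (hchain : l.IsChain G.adj)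
    (hhead : l.head? = some i) (hconn : G.dConnectsPath (G.parents j) l)
    (a : List (Fin p)) (x y : Fin p) (b : List (Fin p)) (hl : l = a ++ x :: y :: b)
    (hyx : (y, x) ∈ G.edges) : ¬ Relation.ReflTransGen G.edgeRel j y := by
  intro hjy
  induction a using List.reverseRecOn generalizing x y b with
  | nil =>
    obtain rfl : x = i := by simpa [hl] using hhead
    exact lt_asymm hij ((hσ.le_of_reflTransGen_s8 hjy).trans_lt (hσ _ hyx))
  | append_singleton a w ih =>
    have hwxy : [w, x, y] <:+: l := ⟨a, b, by simp [hl]⟩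
    have hwx : G.adj w x := (List.isChain_cons_cons.mp (hchain.infix hwxy)).1
    by_cases hcol : (w, x) ∈ G.edges
    · obtain ⟨s, hs, hxs⟩ := (hconn w x y hwxy).1 ⟨hcol, hyx⟩
      exact (hσ.le_of_reflTransGen_s8 ((hjy.tail hyx).trans hxs)).not_gt
        (hσ _ (Finset.mem_filter.mp hs).2)
    · exact ih w x (y :: b) (by simp [hl]) (hwx.resolve_left hcol) (hjy.tail hyx)

theorem dSep_parents {σ : Equiv.Perm (Fin p)} (hσ : IsTopOrder G σ) {i j : Fin p}
    (hne : i ≠ j) (hnadj : ¬ G.adj i j) (hij : σ.symm i < σ.symm j) :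
    G.dSep i j (G.parents j) := by
  refine ⟨hne, ?_⟩
  rintro ⟨l, ⟨hchain, -, hlen, hhead, hlast⟩, hconn⟩
  obtain ⟨l', rfl⟩ := List.getLast?_eq_some_iff.mp hlast
  obtain ⟨a, x, rfl⟩ : ∃ a x, l' = a ++ [x] := by
    rcases List.eq_nil_or_concat l' with rfl | ⟨a, x, rfl⟩
    · simp at hlen
    · exact ⟨a, x, by simp⟩
  simp only [List.append_assoc, List.cons_append, List.nil_append] at *
  have hxj : G.adj x j :=
    (List.isChain_cons_cons.mp (hchain.infix (List.suffix_append _ _).isInfix)).1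
  -- The last edge `x - j` of the path: a parent `x` of `j` is conditioned on, so it must be the
  -- endpoint `i`; an edge `j → x` is excluded by `not_reflTransGen_of_back_edge`.
  by_cases hparent : (x, j) ∈ G.edges
  · rcases List.eq_nil_or_concat a with rfl | ⟨a, w, rfl⟩
    · obtain rfl : x = i := by simpa using hhead
      exact hnadj hxj
    · have hncol : ¬ G.isCollider w x j := fun hcol => not_mem_edges_swap hparent hcol.2
      exact (hconn w x j ⟨a, [], by simp⟩).2 hncol
        (Finset.mem_filter.mpr ⟨Finset.mem_univ _, hparent⟩)
  · exact not_reflTransGen_of_back_edge hσ hij hchain hhead hconn a x j [] (by simp)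
      (hxj.resolve_left hparent) Relation.ReflTransGen.refl

theorem exists_dSep_of_not_adj {i j : Fin p} (hne : i ≠ j) (hnadj : ¬ G.adj i j) :
    ∃ S, G.dSep i j S := by
  obtain ⟨σ, hσ⟩ := G.acyclic
  rcases lt_or_gt_of_ne (σ.symm.injective.ne hne) with hij | hji
  · exact ⟨_, dSep_parents hσ hne hnadj hij⟩
  · exact ⟨_, (dSep_parents hσ hne.symm (fun h => hnadj h.symm) hji).symm⟩

theorem adj_iff_forall_not_dSep {i j : Fin p} : G.adj i j ↔ i ≠ j ∧ ∀ S, ¬ G.dSep i j S := by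
  refine ⟨fun h => ⟨h.ne, fun S hS => hS.2 (dConnected_of_adj h S)⟩, fun ⟨hne, hS⟩ => ?_⟩
  by_contra hnadj
  obtain ⟨S, hsep⟩ := exists_dSep_of_not_adj hne hnadj
  exact hS S hsep

theorem mem_skeleton {a b : Fin p} : s(a, b) ∈ G.skeleton ↔ G.adj a b := by
  simp only [skeleton, Finset.mem_image, Prod.exists, Sym2.eq_iff, adj]
  constructor
  · rintro ⟨x, y, hxy, ⟨rfl, rfl⟩ | ⟨rfl, rfl⟩⟩
    exacts [Or.inl hxy, Or.inr hxy]
  · rintro (h | h)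
    exacts [⟨a, b, h, Or.inl ⟨rfl, rfl⟩⟩, ⟨b, a, h, Or.inr ⟨rfl, rfl⟩⟩]

theorem card_skeleton (G : DAG p) : G.skeleton.card = G.edges.card := by
  refine Finset.card_image_of_injOn fun e he e' he' heq => ?_
  rcases Sym2.eq_iff.mp heq with ⟨h1, h2⟩ | ⟨h1, h2⟩
  · exact Prod.ext h1 h2
  · exact absurd (h1 ▸ h2 ▸ he') (not_mem_edges_swap he)

end DAG

theorem MarkovEquiv.refl (G : DAG p) : MarkovEquiv G G := fun _ _ _ => Iff.rfl

theorem MarkovEquiv.card_edges_eq {G G' : DAG p} (h : MarkovEquiv G G') :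
    G.edges.card = G'.edges.card := by
  rw [← G.card_skeleton, ← G'.card_skeleton]
  congr 1
  ext z
  induction z using Sym2.ind with
  | _ a b => simp only [DAG.mem_skeleton, DAG.adj_iff_forall_not_dSep, h a b]

theorem Markov.of_markovEquiv {G G' : DAG p} {CI : CIModel p} (hM : Markov G' CI)
    (h : MarkovEquiv G G') : Markov G CI :=
  fun i j S hS => hM i j S ((h i j S).mp hS)

theorem exists_minimal_markov_subset {CI : CIModel p} {G : DAG p} (hG : Markov G CI) :
    ∃ H : DAG p, Markov H CI ∧ (∀ G' : DAG p, G'.edges ⊂ H.edges → ¬ Markov G' CI) ∧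
      H.edges ⊆ G.edges := by
  obtain ⟨H, ⟨hHM, hHG⟩, hmin⟩ := (measure fun H : DAG p => H.edges.card).wf.has_min
    {H | Markov H CI ∧ H.edges ⊆ G.edges} ⟨G, hG, subset_rfl⟩
  refine ⟨H, hHM, fun G' hG'H hG'M => ?_, hHG⟩
  exact hmin G' ⟨hG'M, hG'H.subset.trans hHG⟩ (Finset.card_lt_card hG'H)

theorem exists_card_minimalIMap_eq_spScore (CI : CIModel p) :
    ∃ π, (minimalIMap CI π).edges.card = spScore CI := by
  simpa [spScore] using Finset.min'_mem _ (Finset.univ_nonempty.image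
    fun π => (minimalIMap CI π).edges.card)

theorem spScore_le_card_minimalIMap (CI : CIModel p) (π : Equiv.Perm (Fin p)) :
    spScore CI ≤ (minimalIMap CI π).edges.card :=
  Finset.min'_le _ _ (Finset.mem_image_of_mem _ (Finset.mem_univ π))

section SP

variable {CI : CIModel p}

theorem exists_minimalIMap_subset_of_markov
    (hArise : ∀ G : DAG p, Markov G CI →
      (∀ G' : DAG p, G'.edges ⊂ G.edges → ¬ Markov G' CI) →
      ∃ π : Equiv.Perm (Fin p), minimalIMap CI π = G) {G : DAG p} (hG : Markov G CI) :
    ∃ π, (minimalIMap CI π).edges ⊆ G.edges := by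
  obtain ⟨H, hHM, hHmin, hHG⟩ := exists_minimal_markov_subset hG
  obtain ⟨π, rfl⟩ := hArise H hHM hHmin
  exact ⟨π, hHG⟩

theorem spScore_le_card_of_markov
    (hArise : ∀ G : DAG p, Markov G CI →
      (∀ G' : DAG p, G'.edges ⊂ G.edges → ¬ Markov G' CI) →
      ∃ π : Equiv.Perm (Fin p), minimalIMap CI π = G) {G : DAG p} (hG : Markov G CI) :
    spScore CI ≤ G.edges.card := by
  obtain ⟨π, hπ⟩ := exists_minimalIMap_subset_of_markov hArise hG
  exact (spScore_le_card_minimalIMap CI π).trans (Finset.card_le_card hπ)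

theorem mem_SPOutputs_iff
    (hMarkovPi : ∀ π : Equiv.Perm (Fin p), Markov (minimalIMap CI π) CI)
    (hArise : ∀ G : DAG p, Markov G CI →
      (∀ G' : DAG p, G'.edges ⊂ G.edges → ¬ Markov G' CI) →
      ∃ π : Equiv.Perm (Fin p), minimalIMap CI π = G) {G : DAG p} :
    G ∈ SPOutputs CI ↔ Markov G CI ∧ G.edges.card = spScore CI := by
  constructor
  · rintro ⟨π, rfl, hπ⟩
    exact ⟨hMarkovPi π, hπ⟩
  · rintro ⟨hG, hcard⟩
    obtain ⟨π, hπ⟩ := exists_minimalIMap_subset_of_markov hArise hG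
    have hπG : minimalIMap CI π = G := DAG.edges_injective <| Finset.eq_of_subset_of_card_le hπ
      (hcard.trans_le (spScore_le_card_minimalIMap CI π))
    exact ⟨π, hπG, hπG ▸ hcard⟩

end SP

theorem sp_success_iff_SMR_general (CI : CIModel p) (Gstar : DAG p)
    (hMarkovPi : ∀ π : Equiv.Perm (Fin p), Markov (minimalIMap CI π) CI)
    (hArise : ∀ G : DAG p, Markov G CI →
      (∀ G' : DAG p, G'.edges ⊂ G.edges → ¬ Markov G' CI) →
      ∃ π : Equiv.Perm (Fin p), minimalIMap CI π = G) :
    SPOutputs CI = {G : DAG p | MarkovEquiv G Gstar} ↔ SMR Gstar CI := by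
  have hSP : SPOutputs CI = {G | Markov G CI ∧ G.edges.card = spScore CI} :=
    Set.ext fun G => mem_SPOutputs_iff hMarkovPi hArise
  have hle := fun G => spScore_le_card_of_markov (G := G) hArise
  rw [hSP, Set.ext_iff]
  constructor
  · intro hout
    obtain ⟨hstar, hcard⟩ := (hout Gstar).mpr (MarkovEquiv.refl Gstar)
    refine ⟨hstar, fun G hG hne => hcard ▸ (hle G hG).lt_of_ne fun h => hne ?_⟩
    exact (hout G).mp ⟨hG, h.symm⟩
  · rintro ⟨hstar, hsparsest⟩
    obtain ⟨π, hπ⟩ := exists_card_minimalIMap_eq_spScore CI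
    have hπstar : MarkovEquiv (minimalIMap CI π) Gstar := by
      by_contra hne
      exact (hsparsest _ (hMarkovPi π) hne).not_ge (hπ ▸ hle Gstar hstar)
    have hcard : Gstar.edges.card = spScore CI := hπ ▸ hπstar.card_edges_eq.symm
    intro G
    simp only [Set.mem_ofPred_eq, ← hcard]
    refine ⟨fun ⟨hG, hGcard⟩ => ?_, fun h => ⟨hstar.of_markovEquiv h, h.card_edges_eq⟩⟩
    by_contra hne
    exact (hsparsest G hG hne).ne hGcard.symm

/-- The SP algorithm outputs exactly the Markov equivalence class of `G*` if and
only if `(G*, P)` satisfies the sparsest Markov representation assumption.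
(The hypotheses record the facts that every `G_π` is Markov and minimal,
and that every minimal Markov DAG arises as some `G_π`.) -/
theorem sp_success_iff_SMR (CI : CIModel p) (Gstar : DAG p)
    (hMarkovPi : ∀ π : Equiv.Perm (Fin p), Markov (minimalIMap CI π) CI)
    (hMinPi : ∀ (π : Equiv.Perm (Fin p)) (G' : DAG p),
      G'.edges ⊂ (minimalIMap CI π).edges → ¬ Markov G' CI)
    (hArise : ∀ G : DAG p, Markov G CI →
      (∀ G' : DAG p, G'.edges ⊂ G.edges → ¬ Markov G' CI) →
      ∃ π : Equiv.Perm (Fin p), minimalIMap CI π = G) :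
    SPOutputs CI = {G : DAG p | MarkovEquiv G Gstar} ↔ SMR Gstar CI :=
  sp_success_iff_SMR_general CI Gstar hMarkovPi hArise
end
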